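/- For decreasing positive reals a_0 ≥ ... ≥ a_{m-1} > 0, the sum of squared cyclic differences L(b) = ∑_{i=0}^{m-1} (b_{i+1} - b_i)^2 (indices mod m) over cyclic arrangements b of the multiset {a_0,...,a_{m-1}} is minimised by the circular symmetric ordering (a_0, a_2, a_4, ..., a_5, a_3, a_1); equivalently, since ∑ b_i^2 is fixed, this ordering maximises the adjacent pair sum ∑_i b_i b_{i+1}. Formally: L applied to the greedy arrangement is ≤ L applied to any permuted arrangement. -/

import Mathlib

/-!
Write `e j = a j - a (j + 1) ≥ 0` for the gaps between consecutive ranks. A step of the cycle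
between ranks `p < q` costs `(e p + ⋯ + e (q - 1)) ^ 2`, which is at least the sum of the `e j ^ 2`
plus twice the products `e j * e (j + 1)` of adjacent crossed gaps. A closed tour crosses every gap
an even and positive number of times, hence at least twice; and since rank `j + 1` is visited only
once, some step jumps over it, so each adjacent product occurs at least once. Every arrangement
therefore costs at least `2 ∑ e j ^ 2 + 2 ∑ e j * e (j + 1)`, and the greedy one, whose steps go
from rank `j` to `j + 2` except for the steps `0 — 1` and `m - 2 — m - 1`, costs exactly this.
-/

/-- The sum of squared cyclic differences
`L(σ; a) = ∑_{k=0}^{m-1} (a(σ⁻¹((k+1) mod m)) - a(σ⁻¹(k)))²`. -/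
noncomputable def cyclicL (m : ℕ) (σ : Equiv.Perm (Fin m)) (a : Fin m → ℝ) : ℝ :=
  ∑ k : Fin m,
    (a (σ.symm ⟨((k : ℕ) + 1) % m, Nat.mod_lt _ k.pos⟩) - a (σ.symm k)) ^ 2

/-- `g` is the greedy (circular symmetric) permutation: `g⁻¹(i) = 2i` and
`g⁻¹(m-1-i) = 2i+1` for `0 ≤ i ≤ ⌊m/2⌋ - 1`. -/
def IsGreedy {m : ℕ} (g : Equiv.Perm (Fin m)) : Prop :=
  ∀ i : Fin m,
    ((i : ℕ) < m / 2 → ((g.symm i : ℕ)) = 2 * (i : ℕ)) ∧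
    (m - 1 - (i : ℕ) < m / 2 → ((g.symm i : ℕ)) = 2 * (m - 1 - (i : ℕ)) + 1)

open Finset Function

lemma even_card_filter_ne_apply {α : Type*} [Fintype α] (π : Equiv.Perm α) (f : α → Bool) :
    Even #{k | f k ≠ f (π k)} := by
  rw [← ZMod.natCast_eq_zero_iff_even, natCast_card_filter]
  let v : Bool → ZMod 2 := fun b => if b then 1 else 0
  calc ∑ k, (if f k ≠ f (π k) then 1 else 0 : ZMod 2)
      = ∑ k, (v (f k) + v (f (π k))) := by
        refine sum_congr rfl fun k _ => ?_
        cases f k <;> cases f (π k) <;> decide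
    _ = ∑ k, v (f k) + ∑ k, v (f k) := by
        rw [sum_add_distrib, Equiv.sum_comp π fun k => v (f k)]
    _ = 0 := CharTwo.add_self_eq_zero _

open Fin.NatCast in
lemma two_le_card_filter_ne_add_one {m : ℕ} [NeZero m] (f : Fin m → Bool) {i j : Fin m}
    (hij : f i ≠ f j) : 2 ≤ #{k | f k ≠ f (k + 1)} := by
  obtain ⟨r, hr⟩ : Even #{k | f k ≠ f (k + 1)} :=
    even_card_filter_ne_apply (Equiv.addRight 1) f
  obtain ⟨k, hk⟩ : ∃ k, f k ≠ f (k + 1) := by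
    by_contra! hconst
    have hnat : ∀ n : ℕ, f n = f 0 := by
      intro n
      induction n with
      | zero => simp
      | succ n ih => rw [Nat.cast_succ, ← hconst n, ih]
    exact hij (by rw [← Fin.cast_val_eq_self i, ← Fin.cast_val_eq_self j, hnat, hnat])
  have : 0 < #{k | f k ≠ f (k + 1)} := card_pos.mpr ⟨k, by simpa using hk⟩
  omega

lemma sum_sq_add_two_mul_sum_mul_succ_le_sq_sum {e : ℕ → ℝ} {n : ℕ} (he : ∀ i < n, 0 ≤ e i) :
    ∑ i ∈ range n, e i ^ 2 + 2 * ∑ i ∈ range (n - 1), e i * e (i + 1) ≤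
      (∑ i ∈ range n, e i) ^ 2 := by
  induction n with
  | zero => simp
  | succ n ih =>
    rcases n with _ | n
    · simp
    have ih := ih fun i hi => he i (by omega)
    have hlast : e n ≤ ∑ i ∈ range (n + 1), e i :=
      single_le_sum (fun i hi => he i (by rw [mem_range] at hi; omega)) (self_mem_range_succ n)
    have := mul_le_mul_of_nonneg_right hlast (he (n + 1) (by omega))
    simp only [Nat.add_sub_cancel] at ih ⊢
    rw [sum_range_succ (fun i => e i ^ 2), sum_range_succ (fun i => e i * e (i + 1)),
      sum_range_succ e (n + 1)]
    linarith

lemma nsmul_sum_le_sum_sum_of_le_card {ι β M : Type*} [Fintype ι] [DecidableEq β] [AddCommMonoid M]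
    [PartialOrder M] [IsOrderedAddMonoid M] {I : ι → Finset β} {R : Finset β} {F : β → M} {n : ℕ}
    (hI : ∀ k, I k ⊆ R) (hn : ∀ j ∈ R, n ≤ #{k | j ∈ I k}) (hF : ∀ j ∈ R, 0 ≤ F j) :
    n • ∑ j ∈ R, F j ≤ ∑ k, ∑ j ∈ I k, F j := by
  rw [sum_comm' (t' := R) (s' := fun j => {k | j ∈ I k}) (by intro k j; simpa using @hI k j)]
  simp only [sum_const, smul_sum]
  exact sum_le_sum fun j hj => nsmul_le_nsmul_left (hF j hj) (hn j hj)

def gap (x : ℕ → ℝ) (j : ℕ) : ℝ := x j - x (j + 1)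

lemma gap_nonneg {x : ℕ → ℝ} {m j : ℕ} (hx : AntitoneOn x (Set.Iio m)) (hj : j + 1 < m) :
    0 ≤ gap x j :=
  sub_nonneg.mpr (hx (Set.mem_Iio.mpr (by omega)) (Set.mem_Iio.mpr hj) j.le_succ)

def crossedGaps (p q : ℕ) : Finset ℕ := Ico (min p q) (max p q)

def crossedGapPairs (p q : ℕ) : Finset ℕ := Ico (min p q) (max p q - 1)

lemma crossedGaps_subset_range {m p q : ℕ} (hp : p < m) (hq : q < m) :
    crossedGaps p q ⊆ range (m - 1) := by
  intro j
  simp only [crossedGaps, mem_Ico, mem_range]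
  omega

lemma crossedGapPairs_subset_range {m p q : ℕ} (hp : p < m) (hq : q < m) :
    crossedGapPairs p q ⊆ range (m - 2) := by
  intro j
  simp only [crossedGapPairs, mem_Ico, mem_range]
  omega

lemma sum_crossedGaps_add_le_sq_sub {x : ℕ → ℝ} {m p q : ℕ} (hx : AntitoneOn x (Set.Iio m))
    (hp : p < m) (hq : q < m) :
    ∑ j ∈ crossedGaps p q, gap x j ^ 2 + 2 * ∑ j ∈ crossedGapPairs p q, gap x j * gap x (j + 1) ≤
      (x q - x p) ^ 2 := by
  wlog hpq : p ≤ q generalizing p q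
  · have := this hq hp (by omega)
    rwa [crossedGaps, crossedGapPairs, min_comm, max_comm, ← neg_sub, neg_sq]
  have htel : x p - x q = ∑ i ∈ range (q - p), gap x (p + i) := by
    simpa [gap, ← add_assoc, Nat.add_sub_cancel' hpq] using
      (sum_range_sub' (fun i => x (p + i)) (q - p)).symm
  rw [crossedGaps, crossedGapPairs, min_eq_left hpq, max_eq_right hpq, sum_Ico_eq_sum_range,
    sum_Ico_eq_sum_range, ← neg_sub, neg_sq, htel, show q - 1 - p = q - p - 1 by omega]
  exact sum_sq_add_two_mul_sum_mul_succ_le_sq_sum fun i hi => gap_nonneg hx (by omega)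

section ClosedWalk

variable {m : ℕ} [NeZero m] (w : Fin m → ℕ)

lemma two_le_card_crossedGaps {j : ℕ} {k₁ k₂ : Fin m} (h₁ : w k₁ ≤ j) (h₂ : j < w k₂) :
    2 ≤ #{k | j ∈ crossedGaps (w k) (w (k + 1))} := by
  convert two_le_card_filter_ne_add_one (fun k => decide (w k ≤ j)) (i := k₁) (j := k₂)
    (by simp [h₁, h₂]) using 3 with k
  simp only [crossedGaps, mem_Ico, ne_eq, decide_eq_decide]
  omega

lemma exists_mem_crossedGapPairs {j : ℕ} (hw : Injective w) {s k₁ k₂ : Fin m}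
    (hs : w s = j + 1) (h₁ : w k₁ ≤ j) (h₂ : j + 2 ≤ w k₂) :
    ∃ k, j ∈ crossedGapPairs (w k) (w (k + 1)) := by
  by_contra! hno
  simp only [crossedGapPairs, mem_Ico, not_and, not_lt] at hno
  have hat_s : ∀ k, w k = j + 1 → k = s := fun k hk => hw (hk.trans hs.symm)
  obtain ⟨k₀, hk₀⟩ : ∃ k₀, j + 1 ∈ crossedGaps (w k₀) (w (k₀ + 1)) := by
    have := two_le_card_crossedGaps w (j := j + 1) (h₁.trans j.le_succ) h₂
    obtain ⟨k₀, hk₀⟩ := card_pos.mp (two_pos.trans_le this)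
    exact ⟨k₀, (mem_filter.mp hk₀).2⟩
  simp only [crossedGaps, mem_Ico] at hk₀
  -- jumping over no rank, a step across the gap `j + 1` must start or end at `s`
  have hk₀s : k₀ ∈ ({s - 1, s} : Finset (Fin m)) := by
    have := hno k₀
    rcases le_total (w k₀) (w (k₀ + 1)) with h | h
    · simp [hat_s k₀ (by omega)]
    · simp [eq_sub_of_add_eq (hat_s (k₀ + 1) (by omega))]
  -- so `s` has only one neighbour below `j + 1`, yet the gap `j` is crossed twice
  have hsub : ({k | j ∈ crossedGaps (w k) (w (k + 1))} : Finset (Fin m)) ⊆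
      ({s - 1, s} : Finset (Fin m)).erase k₀ := by
    intro k hk
    simp only [crossedGaps, mem_filter, mem_univ, true_and, mem_Ico] at hk
    have := hno k
    refine mem_erase.mpr ⟨by rintro rfl; omega, ?_⟩
    rcases le_total (w k) (w (k + 1)) with h | h
    · simp [eq_sub_of_add_eq (hat_s (k + 1) (by omega))]
    · simp [hat_s k (by omega)]
  have := (card_le_card hsub).trans_eq (card_erase_of_mem hk₀s)
  have := two_le_card_crossedGaps w h₁ (show j < w k₂ by omega)
  have := card_le_two (a := s - 1) (b := s)
  omega

end ClosedWalk

def closedWalkCost {m : ℕ} [NeZero m] (x : ℕ → ℝ) (w : Fin m → ℕ) : ℝ :=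
  ∑ k, (x (w (k + 1)) - x (w k)) ^ 2

def gapBound (x : ℕ → ℝ) (m : ℕ) : ℝ :=
  2 * ∑ j ∈ range (m - 1), gap x j ^ 2 + 2 * ∑ j ∈ range (m - 2), gap x j * gap x (j + 1)

theorem gapBound_le_closedWalkCost {m : ℕ} [NeZero m] {x : ℕ → ℝ}
    (hx : AntitoneOn x (Set.Iio m)) (σ : Equiv.Perm (Fin m)) :
    gapBound x m ≤ closedWalkCost x fun k => σ k := by
  set w : Fin m → ℕ := fun k => σ k
  have hw (k : Fin m) : w k < m := (σ k).isLt
  have hw_val (j : ℕ) (hj : j < m) : w (σ.symm ⟨j, hj⟩) = j := by simp [w]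
  obtain ⟨top, htop⟩ : ∃ k, w k = m - 1 := ⟨_, hw_val (m - 1) (by have := NeZero.pos m; omega)⟩
  have hcross : ∀ j ∈ range (m - 1), 2 ≤ #{k | j ∈ crossedGaps (w k) (w (k + 1))} := by
    intro j hj
    rw [mem_range] at hj
    exact two_le_card_crossedGaps w (k₂ := top) (hw_val j (by omega)).le (by omega)
  have hpair : ∀ j ∈ range (m - 2), 1 ≤ #{k | j ∈ crossedGapPairs (w k) (w (k + 1))} := by
    intro j hj
    rw [mem_range] at hj
    obtain ⟨k, hk⟩ := exists_mem_crossedGapPairs w (Fin.val_injective.comp σ.injective)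
      (k₂ := top) (hw_val (j + 1) (by omega)) (hw_val j (by omega)).le (by omega)
    exact card_pos.mpr ⟨k, by simpa using hk⟩
  have hsq := nsmul_sum_le_sum_sum_of_le_card
    (fun k => crossedGaps_subset_range (hw k) (hw (k + 1))) hcross fun j _ => sq_nonneg (gap x j)
  have hprod := nsmul_sum_le_sum_sum_of_le_card (F := fun j => gap x j * gap x (j + 1))
    (fun k => crossedGapPairs_subset_range (hw k) (hw (k + 1))) hpair fun j hj => by
      rw [mem_range] at hj
      exact mul_nonneg (gap_nonneg hx (by omega)) (gap_nonneg hx (by omega))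
  simp only [nsmul_eq_mul, Nat.cast_ofNat, Nat.cast_one, one_mul] at hsq hprod
  calc gapBound x m
      ≤ ∑ k, (∑ j ∈ crossedGaps (w k) (w (k + 1)), gap x j ^ 2 +
          2 * ∑ j ∈ crossedGapPairs (w k) (w (k + 1)), gap x j * gap x (j + 1)) := by
        rw [sum_add_distrib, ← mul_sum, gapBound]
        linarith
    _ ≤ closedWalkCost x w :=
        sum_le_sum fun k _ => sum_crossedGaps_add_le_sq_sub hx (hw k) (hw (k + 1))

def greedyRank (m k : ℕ) : ℕ := if 2 * k < m then 2 * k else 2 * (m - 1 - k) + 1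

lemma IsGreedy.val_symm_apply {m : ℕ} {g : Equiv.Perm (Fin m)} (hg : IsGreedy g) (k : Fin m) :
    (g.symm k : ℕ) = greedyRank m k := by
  unfold greedyRank
  by_cases hlow : (k : ℕ) < m / 2
  · rw [(hg k).1 hlow, if_pos (by omega)]
  by_cases hhigh : m - 1 - (k : ℕ) < m / 2
  · rw [(hg k).2 hhigh, if_neg (by omega)]
  -- `k` is the middle place of an odd cycle; it gets the one rank `m - 1` no other place takes
  obtain ⟨i, hi⟩ := g.symm.surjective ⟨m - 1, by omega⟩
  have hval : (g.symm i : ℕ) = m - 1 := congrArg Fin.val hi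
  have hik : i = k := Fin.ext (by have := (hg i).1; have := (hg i).2; omega)
  subst hik
  rw [hval, if_pos (by omega)]
  omega

lemma gapBound_add_two (x : ℕ → ℝ) (n : ℕ) :
    gapBound x (n + 2) =
      gap x 0 ^ 2 + gap x n ^ 2 + ∑ j ∈ range n, (gap x j + gap x (j + 1)) ^ 2 := by
  have hsq : ∑ j ∈ range (n + 1), gap x j ^ 2 = ∑ j ∈ range n, gap x j ^ 2 + gap x n ^ 2 :=
    sum_range_succ _ n
  have hsq' : ∑ j ∈ range (n + 1), gap x j ^ 2 = ∑ j ∈ range n, gap x (j + 1) ^ 2 + gap x 0 ^ 2 :=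
    sum_range_succ' _ n
  simp only [gapBound, show n + 2 - 1 = n + 1 from rfl, Nat.add_sub_cancel, add_sq,
    sum_add_distrib, mul_sum]
  simp only [← mul_sum, mul_assoc]
  linarith

lemma sum_greedyRank_steps (x : ℕ → ℝ) (n : ℕ) :
    ∑ t ∈ range (n + 1), (x (greedyRank (n + 2) (t + 1)) - x (greedyRank (n + 2) t)) ^ 2 =
      ∑ j ∈ range (n + 1), (x j - x (min (j + 2) (n + 1))) ^ 2 := by
  set G := greedyRank (n + 2)
  refine sum_nbij' (fun t => min (G t) (G (t + 1)))
    (fun j => if j = n then (n + 1) / 2 else if j % 2 = 0 then j / 2 else n - j / 2)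
    ?_ ?_ ?_ ?_ ?_ <;> intro t ht <;> simp only [mem_range] at ht ⊢
  · simp only [G, greedyRank]; split_ifs <;> omega
  · split_ifs <;> omega
  · simp only [G, greedyRank]; split_ifs <;> omega
  · simp only [G, greedyRank]; split_ifs <;> omega
  · -- consecutive greedy ranks differ by 2, except at the turn, where they are `n` and `n + 1`
    have hstep : max (G t) (G (t + 1)) = min (min (G t) (G (t + 1)) + 2) (n + 1) := by
      simp only [G, greedyRank]; split_ifs <;> omega
    rw [← hstep]
    rcases le_total (G t) (G (t + 1)) with h | h
    · rw [min_eq_left h, max_eq_right h, ← neg_sub, neg_sq]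
    · rw [min_eq_right h, max_eq_left h]

lemma Fin.val_add_one_eq_mod {m : ℕ} [NeZero m] (k : Fin m) :
    ((k + 1 : Fin m) : ℕ) = (k + 1) % m := by
  rw [Fin.val_add, Fin.val_one', Nat.add_mod_mod]

lemma closedWalkCost_eq_sum_range (x : ℕ → ℝ) (f : ℕ → ℕ) (n : ℕ) :
    closedWalkCost x (fun k : Fin (n + 1) => f k) =
      ∑ t ∈ range n, (x (f (t + 1)) - x (f t)) ^ 2 + (x (f 0) - x (f n)) ^ 2 := by
  unfold closedWalkCost
  simp only [Fin.val_add_one_eq_mod]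
  rw [Fin.sum_univ_eq_sum_range (fun t => (x (f ((t + 1) % (n + 1))) - x (f t)) ^ 2),
    sum_range_succ, Nat.mod_self]
  congr 1
  refine sum_congr rfl fun t ht => ?_
  rw [Nat.mod_eq_of_lt (by rw [mem_range] at ht; omega)]

lemma closedWalkCost_greedyRank (x : ℕ → ℝ) (n : ℕ) :
    closedWalkCost x (fun k : Fin (n + 2) => greedyRank (n + 2) k) = gapBound x (n + 2) := by
  have hends : greedyRank (n + 2) 0 = 0 ∧ greedyRank (n + 2) (n + 1) = 1 := by
    simp only [greedyRank]; constructor <;> split_ifs <;> omega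
  have hinner : ∀ j ∈ range n,
      (x j - x (min (j + 2) (n + 1))) ^ 2 = (gap x j + gap x (j + 1)) ^ 2 := by
    intro j hj
    rw [mem_range] at hj
    rw [min_eq_left (by omega), gap, gap]
    ring
  rw [closedWalkCost_eq_sum_range, sum_greedyRank_steps, sum_range_succ, sum_congr rfl hinner,
    hends.1, hends.2, min_eq_right (by omega), gapBound_add_two]
  simp only [gap]
  ring

lemma cyclicL_eq_closedWalkCost {m : ℕ} [NeZero m] (σ : Equiv.Perm (Fin m)) (a : Fin m → ℝ) :
    cyclicL m σ a = closedWalkCost (extend Fin.val a 0) fun k => σ.symm k := by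
  refine sum_congr rfl fun k _ => ?_
  have hsucc : (⟨(k + 1) % m, Nat.mod_lt _ k.pos⟩ : Fin m) = k + 1 :=
    Fin.ext (Fin.val_add_one_eq_mod k).symm
  simp only [hsucc, Fin.val_injective.extend_apply]

lemma antitoneOn_extend_val {m : ℕ} {a : Fin m → ℝ} (ha : Antitone a) :
    AntitoneOn (extend Fin.val a 0) (Set.Iio m) := by
  intro i hi j hj hij
  lift i to Fin m using hi
  lift j to Fin m using hj
  simpa only [Fin.val_injective.extend_apply] using ha hij

theorem stmt_19_general (m : ℕ) (hm : 2 ≤ m) (a : Fin m → ℝ)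
    (hdec : Antitone a) (g : Equiv.Perm (Fin m)) (hg : IsGreedy g)
    (σ : Equiv.Perm (Fin m)) :
    cyclicL m g a ≤ cyclicL m σ a := by
  obtain ⟨n, rfl⟩ : ∃ n, m = n + 2 := ⟨m - 2, by omega⟩
  rw [cyclicL_eq_closedWalkCost, cyclicL_eq_closedWalkCost]
  calc closedWalkCost (extend Fin.val a 0) (fun k => g.symm k)
      = closedWalkCost (extend Fin.val a 0) fun k => greedyRank (n + 2) k := by
        simp only [hg.val_symm_apply]
    _ = gapBound (extend Fin.val a 0) (n + 2) := closedWalkCost_greedyRank _ n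
    _ ≤ _ := gapBound_le_closedWalkCost (antitoneOn_extend_val hdec) σ.symm

/-- The circular symmetric (greedy) ordering minimises the sum of squared cyclic
differences. -/
theorem stmt_19 (m : ℕ) (hm : 2 ≤ m) (a : Fin m → ℝ) (ha : ∀ i, 0 < a i)
    (hdec : Antitone a) (g : Equiv.Perm (Fin m)) (hg : IsGreedy g)
    (σ : Equiv.Perm (Fin m)) :
    cyclicL m g a ≤ cyclicL m σ a :=
  stmt_19_general m hm a hdec g hg σ
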